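/- arXiv:2112.08241 — 4 statements merged into one kernel-verified Lean document; each statement's English description precedes it below -/
import Mathlib

section
/- Let k be a commutative ring, n ≥ 1, r ≥ 1, s ≥ 0 integers, f₁, …, f_r, a₁, …, a_s ∈ k[x₁,…,x_n], and set S = k[x₁,…,x_n, t₁,…,t_r, z] and F = Σ_{i=1}^r t_i f_i − Π_{j=1}^s (z − a_j), and R = S/(F). Fix i with 1 ≤ i ≤ r and assume f_i is a nonzerodivisor in k[x₁,…,x_n]. Then the localization of R away from the image of f_i is isomorphic, as a k[x₁,…,x_n]-algebra, to the polynomial ring in the r variables t₁, …, t_{i−1}, t_{i+1}, …, t_r, z over the localization k[x₁,…,x_n][1/f_i]. -/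
open MvPolynomial

set_option synthInstance.maxHeartbeats 1000000
set_option maxHeartbeats 1000000

noncomputable section

variable (k : Type*) [CommRing k] (n r s : ℕ)

/-- The inclusion `k[x₁,…,xₙ] → S = k[x₁,…,xₙ,t₁,…,t_r,z]`, where the variable
`Sum.inl i` is `xᵢ`, `Sum.inr (Sum.inl i)` is `tᵢ` and `Sum.inr (Sum.inr ())` is `z`. -/
instance hyperAlgebra :
    Algebra (MvPolynomial (Fin n) k) (MvPolynomial (Fin n ⊕ (Fin r ⊕ Unit)) k) :=
  (MvPolynomial.rename (Sum.inl : Fin n → Fin n ⊕ (Fin r ⊕ Unit))).toRingHom.toAlgebra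

variable (f : Fin r → MvPolynomial (Fin n) k) (a : Fin s → MvPolynomial (Fin n) k)

/-- `F = ∑ᵢ tᵢ fᵢ − ∏ⱼ (z − aⱼ)` as an element of `S = k[x₁,…,xₙ,t₁,…,t_r,z]`. -/
def hyperPoly : MvPolynomial (Fin n ⊕ (Fin r ⊕ Unit)) k :=
  (∑ i : Fin r, X (Sum.inr (Sum.inl i)) *
      algebraMap (MvPolynomial (Fin n) k) (MvPolynomial (Fin n ⊕ (Fin r ⊕ Unit)) k) (f i)) -
    ∏ j : Fin s, (X (Sum.inr (Sum.inr ())) -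
      algebraMap (MvPolynomial (Fin n) k) (MvPolynomial (Fin n ⊕ (Fin r ⊕ Unit)) k) (a j))

/-- `R = S/(F) = k[x₁,…,xₙ,t₁,…,t_r,z]/(∑ᵢ tᵢ fᵢ − ∏ⱼ (z − aⱼ))`, viewed as a
`k[x₁,…,xₙ]`-algebra. -/
abbrev HyperRing :=
  MvPolynomial (Fin n ⊕ (Fin r ⊕ Unit)) k ⧸ Ideal.span {hyperPoly k n r s f a}

section Aux

variable {k n r s f a}

local notation "AA" => MvPolynomial (Fin n) k
local notation "SS" => MvPolynomial (Fin n ⊕ (Fin r ⊕ Unit)) k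

variable (i : Fin r)

local notation "AL" => Localization.Away (f i)
local notation "BB" => MvPolynomial ({j : Fin r // j ≠ i} ⊕ Unit) (Localization.Away (f i))
local notation "RR" => HyperRing k n r s f a
local notation "LL" => Localization.Away
  (algebraMap (MvPolynomial (Fin n) k) (HyperRing k n r s f a) (f i))

private lemma sum_split {M : Type*} [AddCommMonoid M] (g : Fin r → M) :
    ∑ j, g j = g i + ∑ j : {j : Fin r // j ≠ i}, g j.1 := by
  rw [← Finset.add_sum_erase _ g (Finset.mem_univ i)]
  congr 1
  exact Finset.sum_subtype _ (fun x => by simp [Finset.mem_erase]) g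

/-- The map `A → B = A[1/fᵢ][t,z]`. -/
private def αB : MvPolynomial (Fin n) k →+* BB :=
  let _ := a
  (MvPolynomial.C : AL →+* BB).comp (algebraMap AA AL)

local notation "αB'" => αB (f := f) (a := a) i

private def vmap : (Fin n ⊕ (Fin r ⊕ Unit)) → BB
  | Sum.inl m => αB' (X m)
  | Sum.inr (Sum.inl j) =>
      if h : j = i then
        ((∏ j' : Fin s, (X (Sum.inr ()) - αB' (a j'))) -
            ∑ j' : {j : Fin r // j ≠ i}, X (Sum.inl j') * αB' (f j'.1)) *
          MvPolynomial.C (IsLocalization.Away.invSelf (f i))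
      else X (Sum.inl ⟨j, h⟩)
  | Sum.inr (Sum.inr _) => X (Sum.inr ())

local notation "vmap'" => vmap (f := f) (a := a) i

private def φS : SS →+* BB := eval₂Hom ((αB').comp MvPolynomial.C) vmap'

local notation "φS'" => φS (f := f) (a := a) i

private lemma φS_C (c : k) : φS' (MvPolynomial.C c) = αB' (MvPolynomial.C c) :=
  eval₂Hom_C _ _ _

private lemma φS_X (v : Fin n ⊕ (Fin r ⊕ Unit)) : φS' (X v) = vmap' v :=
  eval₂Hom_X' _ _ _

private lemma φS_algebraMap (p : MvPolynomial (Fin n) k) :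
    φS' (algebraMap AA SS p) = αB' p := by
  show eval₂Hom ((αB').comp MvPolynomial.C) vmap' (rename Sum.inl p) = αB' p
  rw [eval₂Hom_rename]
  conv_rhs => rw [← eval₂_eta p, eval₂_comp_left αB' MvPolynomial.C X p]
  rfl

private lemma invSelf_key :
    αB' (f i) * MvPolynomial.C (IsLocalization.Away.invSelf (f i)) = (1 : BB) := by
  show MvPolynomial.C (algebraMap AA AL (f i)) * _ = _
  rw [← map_mul, IsLocalization.Away.mul_invSelf, map_one]

private lemma φS_hyperPoly : φS' (hyperPoly k n r s f a) = 0 := by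
  unfold hyperPoly
  rw [map_sub, map_sum, map_prod]
  simp only [map_mul, map_sub, φS_algebraMap, φS_X]
  rw [sum_split i (fun j => vmap' (Sum.inr (Sum.inl j)) * αB' (f j))]
  have h1 : vmap' (Sum.inr (Sum.inl i)) =
      ((∏ j' : Fin s, (X (Sum.inr ()) - αB' (a j'))) -
          ∑ j' : {j : Fin r // j ≠ i}, X (Sum.inl j') * αB' (f j'.1)) *
        MvPolynomial.C (IsLocalization.Away.invSelf (f i)) := by
    show dite _ _ _ = _
    rw [dif_pos rfl]
  have h2 : ∀ j : {j : Fin r // j ≠ i},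
      vmap' (Sum.inr (Sum.inl j.1)) = (X (Sum.inl j) : BB) := by
    intro j
    show dite _ _ _ = _
    rw [dif_neg j.2]
  have h3 : ∀ v, vmap' (Sum.inr (Sum.inr v)) = (X (Sum.inr ()) : BB) := fun _ => rfl
  simp only [h1, h2, h3]
  have key := invSelf_key (f := f) (a := a) i
  set P : BB := ∏ j' : Fin s, (X (Sum.inr ()) - αB' (a j')) with hP
  set Q : BB := ∑ j' : {j : Fin r // j ≠ i}, X (Sum.inl j') * αB' (f j'.1) with hQ
  rw [sub_eq_zero, mul_assoc,
    mul_comm (MvPolynomial.C (IsLocalization.Away.invSelf (f i))) (αB' (f i)), key,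
    mul_one, sub_add_cancel]

private def φR : RR →+* BB :=
  Ideal.Quotient.lift _ φS' (by
    intro x hx
    rw [Ideal.mem_span_singleton] at hx
    obtain ⟨y, rfl⟩ := hx
    rw [map_mul, φS_hyperPoly, zero_mul])

local notation "φR'" => φR (f := f) (a := a) i

private lemma algebraMap_R (p : MvPolynomial (Fin n) k) :
    algebraMap AA RR p = Ideal.Quotient.mk _ (algebraMap AA SS p) := rfl

private lemma φR_mk (x : SS) : φR' (Ideal.Quotient.mk _ x) = φS' x := rfl

private lemma hu : IsUnit (φR' (algebraMap AA RR (f i))) := by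
  rw [algebraMap_R, φR_mk, φS_algebraMap]
  exact (IsLocalization.map_units AL ⟨f i, Submonoid.mem_powers _⟩).map
    (MvPolynomial.C : AL →+* BB)

private def Φ : LL →+* BB :=
  IsLocalization.Away.lift (S := LL)
    (algebraMap AA RR (f i)) (hu (f := f) (a := a) i)

local notation "Φ'" => Φ (f := f) (a := a) i

private lemma Φ_comp : (Φ').comp (algebraMap RR LL) = φR' := by
  unfold Φ
  exact IsLocalization.Away.lift_comp (x := algebraMap AA RR (f i)) (S := LL)
    (hu (f := f) (a := a) i)

/-- The map `A → L`. -/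
private def ρ : MvPolynomial (Fin n) k →+* LL :=
  (algebraMap RR LL).comp (algebraMap AA RR)

local notation "ρ'" => ρ (f := f) (a := a) i

private lemma hu' : IsUnit (ρ' (f i)) :=
  IsLocalization.map_units LL ⟨algebraMap AA RR (f i), Submonoid.mem_powers _⟩

private def ψ₀ : AL →+* LL := IsLocalization.Away.lift (f i) (hu' (f := f) (a := a) i)

local notation "ψ₀'" => ψ₀ (f := f) (a := a) i

private lemma ψ₀_algebraMap (p : MvPolynomial (Fin n) k) :
    ψ₀' (algebraMap AA AL p) = ρ' p := by
  unfold ψ₀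
  exact IsLocalization.Away.lift_eq _ _ _

private def wmap : ({j : Fin r // j ≠ i} ⊕ Unit) → LL
  | Sum.inl j => algebraMap RR LL (Ideal.Quotient.mk _ (X (Sum.inr (Sum.inl j.1))))
  | Sum.inr _ => algebraMap RR LL (Ideal.Quotient.mk _ (X (Sum.inr (Sum.inr ()))))

local notation "wmap'" => wmap (f := f) (a := a) i

private def ψ : BB →+* LL := eval₂Hom ψ₀' wmap'

local notation "ψ'" => ψ (f := f) (a := a) i

private lemma ψ_C (c : Localization.Away (f i)) : ψ' (MvPolynomial.C c) = ψ₀' c :=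
  eval₂Hom_C _ _ _

private lemma ψ_X (w : {j : Fin r // j ≠ i} ⊕ Unit) : ψ' (X w) = wmap' w :=
  eval₂Hom_X' _ _ _

private lemma ψ_αB (p : MvPolynomial (Fin n) k) : ψ' (αB' p) = ρ' p := by
  show ψ' (MvPolynomial.C (algebraMap AA AL p)) = _
  rw [ψ_C, ψ₀_algebraMap]

private def mkL : SS →+* LL :=
  (algebraMap RR LL).comp (Ideal.Quotient.mk _)

local notation "mkL'" => mkL (f := f) (a := a) i

private lemma mkL_algebraMap (p : MvPolynomial (Fin n) k) :
    mkL' (algebraMap AA SS p) = ρ' p := rfl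

private lemma mkL_hyperPoly : mkL' (hyperPoly k n r s f a) = 0 := by
  rw [mkL, RingHom.comp_apply]
  have h : Ideal.Quotient.mk (Ideal.span {hyperPoly k n r s f a}) (hyperPoly k n r s f a) = 0 :=
    Ideal.Quotient.eq_zero_iff_mem.2 (Ideal.subset_span rfl)
  rw [h, map_zero]

private lemma rel :
    mkL' (X (Sum.inr (Sum.inl i))) * ρ' (f i) +
      ∑ j : {j : Fin r // j ≠ i}, mkL' (X (Sum.inr (Sum.inl j.1))) * ρ' (f j.1) =
    ∏ j : Fin s, (mkL' (X (Sum.inr (Sum.inr ()))) - ρ' (a j)) := by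
  have h : mkL' ((∑ i : Fin r, X (Sum.inr (Sum.inl i)) * algebraMap AA SS (f i)) -
      ∏ j : Fin s, (X (Sum.inr (Sum.inr ())) - algebraMap AA SS (a j))) = 0 :=
    mkL_hyperPoly (f := f) (a := a) i
  rw [map_sub, map_sum, map_prod, sub_eq_zero] at h
  simp only [map_mul, map_sub, mkL_algebraMap] at h
  rw [← h, sum_split i (fun j => mkL' (X (Sum.inr (Sum.inl j))) * ρ' (f j))]

private lemma ψ₀_invSelf_key : ρ' (f i) * ψ₀' (IsLocalization.Away.invSelf (f i)) = 1 := by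
  rw [← ψ₀_algebraMap, ← map_mul, IsLocalization.Away.mul_invSelf, map_one]

private lemma comp_ψΦ : (ψ').comp Φ' = RingHom.id _ := by
  refine IsLocalization.ringHom_ext (S := LL) (P := LL)
    (Submonoid.powers (algebraMap AA RR (f i))) ?_
  rw [RingHom.comp_assoc, Φ_comp]
  apply Ideal.Quotient.ringHom_ext
  apply MvPolynomial.ringHom_ext
  · intro c
    show ψ' (φS' (MvPolynomial.C c)) = mkL' (MvPolynomial.C c)
    rw [φS_C, ψ_αB, ← mkL_algebraMap]
    congr 1
    exact rename_C Sum.inl c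
  · intro v
    show ψ' (φS' (X v)) = mkL' (X v)
    rw [φS_X]
    match v with
    | Sum.inl m =>
        show ψ' (αB' (X m)) = _
        rw [ψ_αB, ← mkL_algebraMap]
        congr 1
        exact rename_X Sum.inl m
    | Sum.inr (Sum.inr u) =>
        show ψ' (X (Sum.inr ())) = _
        rw [ψ_X]
        rfl
    | Sum.inr (Sum.inl j) =>
        by_cases hj : j = i
        · rw [hj]
          show ψ' (vmap' (Sum.inr (Sum.inl i))) = mkL' (X (Sum.inr (Sum.inl i)))
          have h1 : vmap' (Sum.inr (Sum.inl i)) =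
              ((∏ j' : Fin s, (X (Sum.inr ()) - αB' (a j'))) -
                  ∑ j' : {j' : Fin r // j' ≠ i}, X (Sum.inl j') * αB' (f j'.1)) *
                MvPolynomial.C (IsLocalization.Away.invSelf (f i)) := by
            show dite _ _ _ = _
            rw [dif_pos rfl]
          rw [h1, map_mul, map_sub, map_prod, map_sum]
          simp only [map_mul, map_sub, ψ_αB, ψ_X, ψ_C]
          have hw1 : ∀ j' : {j' : Fin r // j' ≠ i},
              wmap' (Sum.inl j') = mkL' (X (Sum.inr (Sum.inl j'.1))) := fun _ => rfl
          have hw2 : wmap' (Sum.inr ()) = mkL' (X (Sum.inr (Sum.inr ()))) := rfl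
          simp only [hw1, hw2]
          have hrel := rel (f := f) (a := a) i
          have hkey := ψ₀_invSelf_key (f := f) (a := a) i
          set T : LL := mkL' (X (Sum.inr (Sum.inl i))) with hT
          set P : LL := ∏ j' : Fin s, (mkL' (X (Sum.inr (Sum.inr ()))) - ρ' (a j')) with hP2
          set Q : LL := ∑ j' : {j' : Fin r // j' ≠ i},
            mkL' (X (Sum.inr (Sum.inl j'.1))) * ρ' (f j'.1) with hQ2
          set u : LL := ψ₀' (IsLocalization.Away.invSelf (f i)) with hu2
          show (P - Q) * u = T
          have hPQ : P - Q = T * ρ' (f i) := by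
            rw [← hrel]; ring
          rw [hPQ, mul_assoc, hkey, mul_one]
        · show ψ' (vmap' (Sum.inr (Sum.inl j))) = mkL' (X (Sum.inr (Sum.inl j)))
          have h1 : vmap' (Sum.inr (Sum.inl j)) = X (Sum.inl ⟨j, hj⟩) := by
            show dite _ _ _ = _
            rw [dif_neg hj]
          rw [h1, ψ_X]
          rfl

private lemma Φψ₀ : (Φ').comp ψ₀' = (MvPolynomial.C : AL →+* BB) := by
  refine IsLocalization.ringHom_ext (S := AL) (P := BB) (Submonoid.powers (f i)) ?_
  refine RingHom.ext fun p => ?_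
  show Φ' (ψ₀' (algebraMap AA AL p)) = MvPolynomial.C (algebraMap AA AL p)
  rw [ψ₀_algebraMap]
  show Φ' (algebraMap RR LL (algebraMap AA RR p)) = _
  rw [← RingHom.comp_apply, Φ_comp, algebraMap_R, φR_mk, φS_algebraMap]
  rfl

private lemma comp_Φψ : (Φ').comp ψ' = RingHom.id _ := by
  apply MvPolynomial.ringHom_ext
  · intro c
    show Φ' (ψ' (MvPolynomial.C c)) = MvPolynomial.C c
    rw [ψ_C]
    exact RingHom.congr_fun (Φψ₀ (f := f) (a := a) i) c
  · intro v
    show Φ' (ψ' (X v)) = X v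
    rw [ψ_X]
    match v with
    | Sum.inl j =>
        show Φ' (algebraMap RR LL (Ideal.Quotient.mk _ (X (Sum.inr (Sum.inl j.1))))) = _
        rw [← RingHom.comp_apply, Φ_comp, φR_mk, φS_X]
        show dite _ _ _ = _
        rw [dif_neg j.2]
    | Sum.inr u =>
        cases u
        show Φ' (algebraMap RR LL (Ideal.Quotient.mk _ (X (Sum.inr (Sum.inr ()))))) = _
        rw [← RingHom.comp_apply, Φ_comp, φR_mk, φS_X]
        rfl

end Aux
/-- If `fᵢ` is a nonzerodivisor in `k[x₁,…,xₙ]`, then the localization of `R = S/(F)` away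
from (the image of) `fᵢ` is isomorphic, as a `k[x₁,…,xₙ]`-algebra, to the polynomial ring
over `k[x₁,…,xₙ][1/fᵢ]` in the `r` variables `t₁, …, t̂ᵢ, …, t_r, z`. -/
theorem localization_away_hyperRing_iso_polynomialRing
    (hn : 1 ≤ n) (hr : 1 ≤ r) (i : Fin r)
    (hfi : f i ∈ nonZeroDivisors (MvPolynomial (Fin n) k)) :
    ∃ e : Localization.Away
            (algebraMap (MvPolynomial (Fin n) k) (HyperRing k n r s f a) (f i)) ≃+*
          MvPolynomial ({j : Fin r // j ≠ i} ⊕ Unit) (Localization.Away (f i)),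
      ∀ p : MvPolynomial (Fin n) k,
        e (algebraMap (HyperRing k n r s f a)
            (Localization.Away
              (algebraMap (MvPolynomial (Fin n) k) (HyperRing k n r s f a) (f i)))
            (algebraMap (MvPolynomial (Fin n) k) (HyperRing k n r s f a) p)) =
          algebraMap (MvPolynomial (Fin n) k)
            (MvPolynomial ({j : Fin r // j ≠ i} ⊕ Unit) (Localization.Away (f i))) p := by
  refine ⟨RingEquiv.ofRingHom (Φ (f := f) (a := a) i) (ψ (f := f) (a := a) i)
    (comp_Φψ (f := f) (a := a) i) (comp_ψΦ (f := f) (a := a) i), fun p => ?_⟩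
  show Φ (f := f) (a := a) i (algebraMap _ _ (algebraMap _ _ p)) = _
  rw [← RingHom.comp_apply, Φ_comp, algebraMap_R, φR_mk, φS_algebraMap]
  rfl

end
end

section
/- Let k be a commutative ring, n ≥ 1, r ≥ 1, s ≥ 0 integers, f₁, …, f_r, a₁, …, a_s ∈ k[x₁,…,x_n], let I = (f₁,…,f_r) ⊆ k[x₁,…,x_n], and set R = k[x₁,…,x_n, t₁,…,t_r, z]/(Σ_{i=1}^r t_i f_i − Π_{j=1}^s (z − a_j)). Then the quotient R/IR is isomorphic, as a k[x₁,…,x_n]-algebra, to the polynomial ring S'[t₁,…,t_r], where S' = k[x₁,…,x_n, z]/(I + (Π_{j=1}^s (z − a_j))). -/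
open MvPolynomial

set_option synthInstance.maxHeartbeats 1000000
set_option maxHeartbeats 1000000

noncomputable section

variable (k : Type*) [CommRing k] (n r s : ℕ)

variable (f : Fin r → MvPolynomial (Fin n) k) (a : Fin s → MvPolynomial (Fin n) k)

/-- `S' = k[x₁,…,xₙ,z]/(I + (∏ⱼ (z − aⱼ)))`, where `I = (f₁,…,f_r)`. -/
abbrev HyperFiberRing :=
  Polynomial (MvPolynomial (Fin n) k) ⧸
    ((Ideal.span (Set.range f)).map (Polynomial.C) ⊔
      Ideal.span {∏ j : Fin s, (Polynomial.X - Polynomial.C (a j))})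

/-- The quotient `R/IR`. -/
abbrev HyperQuot :=
  HyperRing k n r s f a ⧸
    (Ideal.span (Set.range f)).map
      (algebraMap (MvPolynomial (Fin n) k) (HyperRing k n r s f a))

instance hyperRingCommRing : CommRing (HyperRing k n r s f a) := Ideal.Quotient.commRing _

instance hyperQuotCommRing : CommRing (HyperQuot k n r s f a) := Ideal.Quotient.commRing _

instance hyperQuotAlgebra : Algebra (MvPolynomial (Fin n) k) (HyperQuot k n r s f a) :=
  Ideal.Quotient.algebra _

/-- The forward map `S → S'[t₁,…,t_r]` on polynomial rings. -/
def hyperFwdAux :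
    MvPolynomial (Fin n ⊕ (Fin r ⊕ Unit)) k →+*
      MvPolynomial (Fin r) (HyperFiberRing k n r s f a) :=
  MvPolynomial.eval₂Hom (algebraMap k _)
    (Sum.elim (fun i => MvPolynomial.C (Ideal.Quotient.mk _ (Polynomial.C (X i))))
      (Sum.elim (fun i => MvPolynomial.X i)
        (fun _ => MvPolynomial.C (Ideal.Quotient.mk _ Polynomial.X))))

lemma hyperFwdAux_algebraMap (p : MvPolynomial (Fin n) k) :
    hyperFwdAux k n r s f a
        (algebraMap (MvPolynomial (Fin n) k) (MvPolynomial (Fin n ⊕ (Fin r ⊕ Unit)) k) p)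
      = MvPolynomial.C (Ideal.Quotient.mk _ (Polynomial.C p)) := by
  have h : (hyperFwdAux k n r s f a).comp
        (algebraMap (MvPolynomial (Fin n) k) (MvPolynomial (Fin n ⊕ (Fin r ⊕ Unit)) k))
      = (MvPolynomial.C : HyperFiberRing k n r s f a →+* _).comp
        ((Ideal.Quotient.mk _).comp (Polynomial.C)) := by
    apply MvPolynomial.ringHom_ext
    · intro c
      show hyperFwdAux k n r s f a (MvPolynomial.rename Sum.inl (MvPolynomial.C c)) = _
      rw [MvPolynomial.rename_C]
      rw [show hyperFwdAux k n r s f a (MvPolynomial.C c) = algebraMap k _ c from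
        MvPolynomial.eval₂Hom_C _ _ _]
      rfl
    · intro i
      show hyperFwdAux k n r s f a (MvPolynomial.rename Sum.inl (X i)) = _
      simp [hyperFwdAux]
  exact congrFun (congrArg DFunLike.coe h) p

lemma mkFiber_C_f (i : Fin r) :
    (Ideal.Quotient.mk ((Ideal.span (Set.range f)).map (Polynomial.C) ⊔
        Ideal.span {∏ j : Fin s, (Polynomial.X - Polynomial.C (a j))}))
      (Polynomial.C (f i)) = 0 :=
  Ideal.Quotient.eq_zero_iff_mem.mpr <| Ideal.mem_sup_left <|
    Ideal.mem_map_of_mem _ (Ideal.subset_span ⟨i, rfl⟩)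

lemma mkFiber_prod :
    (Ideal.Quotient.mk ((Ideal.span (Set.range f)).map (Polynomial.C) ⊔
        Ideal.span {∏ j : Fin s, (Polynomial.X - Polynomial.C (a j))}))
      (∏ j : Fin s, (Polynomial.X - Polynomial.C (a j))) = 0 :=
  Ideal.Quotient.eq_zero_iff_mem.mpr <| Ideal.mem_sup_right <| Ideal.subset_span rfl

lemma hyperFwdAux_hyperPoly : hyperFwdAux k n r s f a (hyperPoly k n r s f a) = 0 := by
  rw [hyperPoly, map_sub, map_sum]
  have h1 : ∀ i : Fin r,
      hyperFwdAux k n r s f a (X (Sum.inr (Sum.inl i)) *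
        algebraMap (MvPolynomial (Fin n) k) _ (f i)) = 0 := by
    intro i
    rw [map_mul, hyperFwdAux_algebraMap, mkFiber_C_f, map_zero, mul_zero]
  have h2 : hyperFwdAux k n r s f a
      (∏ j : Fin s, (X (Sum.inr (Sum.inr ())) -
        algebraMap (MvPolynomial (Fin n) k) _ (a j))) = 0 := by
    rw [map_prod]
    have he : ∀ j : Fin s, hyperFwdAux k n r s f a
        (X (Sum.inr (Sum.inr ())) - algebraMap (MvPolynomial (Fin n) k) _ (a j))
        = MvPolynomial.C (Ideal.Quotient.mk _ (Polynomial.X - Polynomial.C (a j))) := by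
      intro j
      rw [map_sub, hyperFwdAux_algebraMap, map_sub, map_sub]
      congr 1
      simp [hyperFwdAux]
    rw [Finset.prod_congr rfl fun j _ => he j, ← map_prod, ← map_prod, mkFiber_prod,
      map_zero]
  rw [Finset.sum_congr rfl fun i _ => h1 i, Finset.sum_const_zero, h2, sub_zero]

/-- The forward map on `R`. -/
def hyperFwd1 : HyperRing k n r s f a →+* MvPolynomial (Fin r) (HyperFiberRing k n r s f a) :=
  Ideal.Quotient.lift _ (hyperFwdAux k n r s f a) (by
    intro x hx
    obtain ⟨c, rfl⟩ := Ideal.mem_span_singleton.mp hx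
    rw [map_mul, hyperFwdAux_hyperPoly, zero_mul])

@[simp] lemma hyperFwd1_mk (x : MvPolynomial (Fin n ⊕ (Fin r ⊕ Unit)) k) :
    hyperFwd1 k n r s f a (Ideal.Quotient.mk _ x) = hyperFwdAux k n r s f a x := rfl

/-- The forward map `R/IR → S'[t₁,…,t_r]`. -/
def hyperFwd : HyperQuot k n r s f a →+* MvPolynomial (Fin r) (HyperFiberRing k n r s f a) :=
  Ideal.Quotient.lift _ (hyperFwd1 k n r s f a) (by
    have hle : (Ideal.span (Set.range f)).map
          (algebraMap (MvPolynomial (Fin n) k) (HyperRing k n r s f a))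
        ≤ RingHom.ker (hyperFwd1 k n r s f a) := by
      rw [Ideal.map_le_iff_le_comap, Ideal.span_le]
      rintro _ ⟨i, rfl⟩
      have : hyperFwd1 k n r s f a
          (algebraMap (MvPolynomial (Fin n) k) (HyperRing k n r s f a) (f i)) = 0 := by
        show hyperFwd1 k n r s f a (Ideal.Quotient.mk _
          (algebraMap (MvPolynomial (Fin n) k) _ (f i))) = 0
        rw [hyperFwd1_mk, hyperFwdAux_algebraMap, mkFiber_C_f, map_zero]
      exact this
    exact fun x hx => hle hx)

@[simp] lemma hyperFwd_mk (x : MvPolynomial (Fin n ⊕ (Fin r ⊕ Unit)) k) :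
    hyperFwd k n r s f a (Ideal.Quotient.mk _ (Ideal.Quotient.mk _ x))
      = hyperFwdAux k n r s f a x := rfl

/-- image of `z` in `R/IR`. -/
def hyperZ : HyperQuot k n r s f a :=
  Ideal.Quotient.mk _ (Ideal.Quotient.mk _ (X (Sum.inr (Sum.inr ()))))

/-- The backward map on `k[x][z]`. -/
def hyperBwdZ : Polynomial (MvPolynomial (Fin n) k) →+* HyperQuot k n r s f a :=
  Polynomial.eval₂RingHom (algebraMap (MvPolynomial (Fin n) k) _) (hyperZ k n r s f a)

lemma hyperQuot_algebraMap_f (i : Fin r) :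
    algebraMap (MvPolynomial (Fin n) k) (HyperQuot k n r s f a) (f i) = 0 := by
  show Ideal.Quotient.mk _
    (algebraMap (MvPolynomial (Fin n) k) (HyperRing k n r s f a) (f i)) = 0
  exact Ideal.Quotient.eq_zero_iff_mem.mpr
    (Ideal.mem_map_of_mem _ (Ideal.subset_span ⟨i, rfl⟩))

lemma hyperBwdZ_prod :
    hyperBwdZ k n r s f a (∏ j : Fin s, (Polynomial.X - Polynomial.C (a j))) = 0 := by
  set I := Ideal.span {hyperPoly k n r s f a} with hI
  have h0 : (Ideal.Quotient.mk I) (hyperPoly k n r s f a) = 0 :=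
    Ideal.Quotient.eq_zero_iff_mem.mpr (Ideal.subset_span rfl)
  rw [hyperPoly, map_sub, sub_eq_zero] at h0
  have key : hyperBwdZ k n r s f a (∏ j : Fin s, (Polynomial.X - Polynomial.C (a j)))
      = Ideal.Quotient.mk _ ((Ideal.Quotient.mk _)
        (∏ j : Fin s, (X (Sum.inr (Sum.inr ())) -
          algebraMap (MvPolynomial (Fin n) k) _ (a j)))) := by
    rw [map_prod, map_prod, map_prod]
    refine Finset.prod_congr rfl fun j _ => ?_
    rw [map_sub, map_sub, map_sub]
    congr 1
    · rw [show hyperBwdZ k n r s f a Polynomial.X = hyperZ k n r s f a from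
        Polynomial.eval₂_X _ _]
      rfl
    · rw [show hyperBwdZ k n r s f a (Polynomial.C (a j))
          = algebraMap (MvPolynomial (Fin n) k) _ (a j) from Polynomial.eval₂_C _ _]
      rfl
  rw [key, ← h0, map_sum, map_sum]
  refine Finset.sum_eq_zero fun i _ => ?_
  rw [map_mul, map_mul]
  have : (Ideal.Quotient.mk _ : HyperRing k n r s f a → HyperQuot k n r s f a)
      ((Ideal.Quotient.mk _) (algebraMap (MvPolynomial (Fin n) k) _ (f i))) = 0 :=
    hyperQuot_algebraMap_f k n r s f a i
  rw [this, mul_zero]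

/-- The backward map on `S'`. -/
def hyperBwd1 : HyperFiberRing k n r s f a →+* HyperQuot k n r s f a :=
  Ideal.Quotient.lift _ (hyperBwdZ k n r s f a) (by
    have hle : (Ideal.span (Set.range f)).map (Polynomial.C) ⊔
          Ideal.span {∏ j : Fin s, (Polynomial.X - Polynomial.C (a j))}
        ≤ RingHom.ker (hyperBwdZ k n r s f a) := by
      refine sup_le ?_ ?_
      · rw [Ideal.map_le_iff_le_comap, Ideal.span_le]
        rintro _ ⟨i, rfl⟩
        have : hyperBwdZ k n r s f a (Polynomial.C (f i)) = 0 := by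
          rw [show hyperBwdZ k n r s f a (Polynomial.C (f i))
              = algebraMap (MvPolynomial (Fin n) k) _ (f i) from
            Polynomial.eval₂_C _ _, hyperQuot_algebraMap_f]
        exact this
      · rw [Ideal.span_le]
        rintro _ rfl
        exact hyperBwdZ_prod k n r s f a
    exact fun x hx => hle hx)

/-- The backward map `S'[t₁,…,t_r] → R/IR`. -/
def hyperBwd : MvPolynomial (Fin r) (HyperFiberRing k n r s f a) →+* HyperQuot k n r s f a :=
  MvPolynomial.eval₂Hom (hyperBwd1 k n r s f a)
    (fun i => Ideal.Quotient.mk _ (Ideal.Quotient.mk _ (X (Sum.inr (Sum.inl i)))))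

@[simp] lemma hyperBwd_C (h : HyperFiberRing k n r s f a) :
    hyperBwd k n r s f a (MvPolynomial.C h) = hyperBwd1 k n r s f a h :=
  MvPolynomial.eval₂Hom_C _ _ _

@[simp] lemma hyperBwd_X (i : Fin r) :
    hyperBwd k n r s f a (MvPolynomial.X i)
      = Ideal.Quotient.mk _ (Ideal.Quotient.mk _ (X (Sum.inr (Sum.inl i)))) :=
  MvPolynomial.eval₂Hom_X' _ _ _

@[simp] lemma hyperBwd1_mk (q : Polynomial (MvPolynomial (Fin n) k)) :
    hyperBwd1 k n r s f a (Ideal.Quotient.mk _ q) = hyperBwdZ k n r s f a q := rfl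

@[simp] lemma hyperBwdZ_C (p : MvPolynomial (Fin n) k) :
    hyperBwdZ k n r s f a (Polynomial.C p)
      = algebraMap (MvPolynomial (Fin n) k) (HyperQuot k n r s f a) p :=
  Polynomial.eval₂_C _ _

@[simp] lemma hyperBwdZ_X : hyperBwdZ k n r s f a Polynomial.X = hyperZ k n r s f a :=
  Polynomial.eval₂_X _ _

lemma hyperQuot_algebraMap_eq (p : MvPolynomial (Fin n) k) :
    algebraMap (MvPolynomial (Fin n) k) (HyperQuot k n r s f a) p
      = Ideal.Quotient.mk _ (Ideal.Quotient.mk _ (MvPolynomial.rename Sum.inl p)) := rfl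

lemma hyperBwd_fwd :
    (hyperBwd k n r s f a).comp (hyperFwd k n r s f a) = RingHom.id _ := by
  apply Ideal.Quotient.ringHom_ext
  apply Ideal.Quotient.ringHom_ext
  apply MvPolynomial.ringHom_ext
  · intro c
    simp only [RingHom.coe_comp, Function.comp_apply, RingHom.id_apply]
    rw [hyperFwd_mk, show hyperFwdAux k n r s f a (MvPolynomial.C c)
        = algebraMap k (MvPolynomial (Fin r) (HyperFiberRing k n r s f a)) c from
      MvPolynomial.eval₂Hom_C _ _ _,
      show algebraMap k (MvPolynomial (Fin r) (HyperFiberRing k n r s f a)) c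
        = MvPolynomial.C (Ideal.Quotient.mk _ (Polynomial.C (MvPolynomial.C c))) from rfl,
      hyperBwd_C, hyperBwd1_mk, hyperBwdZ_C, hyperQuot_algebraMap_eq,
      MvPolynomial.rename_C]
  · rintro (i | i | ⟨⟩) <;>
      simp only [RingHom.coe_comp, Function.comp_apply, RingHom.id_apply, hyperFwd_mk]
    · rw [show hyperFwdAux k n r s f a (X (Sum.inl i))
          = MvPolynomial.C (Ideal.Quotient.mk _ (Polynomial.C (X i : MvPolynomial (Fin n) k))) from
        MvPolynomial.eval₂Hom_X' _ _ _,
        hyperBwd_C, hyperBwd1_mk, hyperBwdZ_C, hyperQuot_algebraMap_eq,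
        MvPolynomial.rename_X]
    · rw [show hyperFwdAux k n r s f a (X (Sum.inr (Sum.inl i))) = MvPolynomial.X i from
        MvPolynomial.eval₂Hom_X' _ _ _, hyperBwd_X]
    · rw [show hyperFwdAux k n r s f a (X (Sum.inr (Sum.inr ())))
          = MvPolynomial.C (Ideal.Quotient.mk _ Polynomial.X) from
        MvPolynomial.eval₂Hom_X' _ _ _,
        hyperBwd_C, hyperBwd1_mk, hyperBwdZ_X]
      rfl

lemma hyperFwd_bwd :
    (hyperFwd k n r s f a).comp (hyperBwd k n r s f a) = RingHom.id _ := by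
  apply MvPolynomial.ringHom_ext
  · intro h
    simp only [RingHom.coe_comp, Function.comp_apply, RingHom.id_apply, hyperBwd_C]
    have key : (hyperFwd k n r s f a).comp (hyperBwd1 k n r s f a)
        = (MvPolynomial.C : HyperFiberRing k n r s f a →+* _).comp (RingHom.id _) := by
      apply Ideal.Quotient.ringHom_ext
      apply Polynomial.ringHom_ext
      · intro p
        simp only [RingHom.coe_comp, Function.comp_apply, RingHom.id_apply]
        rw [hyperBwd1_mk, hyperBwdZ_C, hyperQuot_algebraMap_eq, hyperFwd_mk]
        exact hyperFwdAux_algebraMap k n r s f a p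
      · simp only [RingHom.coe_comp, Function.comp_apply, RingHom.id_apply]
        rw [hyperBwd1_mk, hyperBwdZ_X]
        rw [show hyperZ k n r s f a = Ideal.Quotient.mk _
          (Ideal.Quotient.mk _ (X (Sum.inr (Sum.inr ())))) from rfl, hyperFwd_mk]
        rw [show hyperFwdAux k n r s f a (X (Sum.inr (Sum.inr ())))
            = MvPolynomial.C (Ideal.Quotient.mk _ Polynomial.X) from
          MvPolynomial.eval₂Hom_X' _ _ _]
    have := congrFun (congrArg DFunLike.coe key) h
    simpa using this
  · intro i
    simp only [RingHom.coe_comp, Function.comp_apply, RingHom.id_apply, hyperBwd_X,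
      hyperFwd_mk]
    exact MvPolynomial.eval₂Hom_X' _ _ _


attribute [-instance] hyperRingCommRing hyperQuotCommRing hyperQuotAlgebra

/-- With `I = (f₁,…,f_r) ⊆ k[x₁,…,xₙ]`, the quotient `R/IR` is isomorphic, as a
`k[x₁,…,xₙ]`-algebra, to the polynomial ring `S'[t₁,…,t_r]` where
`S' = k[x₁,…,xₙ,z]/(I + (∏ⱼ (z − aⱼ)))`. -/
theorem hyperRing_quotient_iso (hn : 1 ≤ n) (hr : 1 ≤ r) :
    Nonempty
      ((HyperRing k n r s f a ⧸
          (Ideal.span (Set.range f)).map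
            (algebraMap (MvPolynomial (Fin n) k) (HyperRing k n r s f a)))
        ≃ₐ[MvPolynomial (Fin n) k]
        MvPolynomial (Fin r) (HyperFiberRing k n r s f a)) := by
  refine ⟨AlgEquiv.ofRingEquiv (f := RingEquiv.ofRingHom (hyperFwd k n r s f a)
    (hyperBwd k n r s f a) (hyperFwd_bwd k n r s f a) (hyperBwd_fwd k n r s f a)) ?_⟩
  intro p
  show hyperFwd k n r s f a
    (Ideal.Quotient.mk _ (Ideal.Quotient.mk _ (algebraMap _ _ p))) = _
  rw [hyperFwd_mk, hyperFwdAux_algebraMap]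
  rfl

end
end

section
/- Let k be a commutative ring, R a k-algebra, and f₁, …, f_c a regular sequence in R such that R/(f₁,…,f_c) is flat as a k-module, and let g ∈ k[x₁,…,x_n] be a nonzerodivisor such that R[x₁,…,x_n]/(f₁,…,f_c,g) ≠ 0. Then the images of f₁, …, f_c, g in the polynomial ring R[x₁,…,x_n] form a regular sequence. -/
open TensorProduct

lemma isSMulRegular_map_of_flat (k A : Type*) [CommRing k] [CommRing A] [Algebra k A]
    [Module.Flat k A] {σ : Type*} {g : MvPolynomial σ k}
    (hg : g ∈ nonZeroDivisors (MvPolynomial σ k)) :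
    IsSMulRegular (MvPolynomial σ A) (MvPolynomial.map (algebraMap k A) g) := by
  let e := MvPolynomial.algebraTensorAlgEquiv (R := k) (σ := σ) (A := A)
  have hinj : Function.Injective (LinearMap.mulLeft k g) := by
    intro a b hab
    simp only [LinearMap.mulLeft_apply] at hab
    have h0 : (a - b) * g = 0 := by
      rw [sub_mul, mul_comm a, mul_comm b, hab, sub_self]
    exact sub_eq_zero.mp (mem_nonZeroDivisors_iff_right.mp hg _ h0)
  have hmul : Function.Injective (fun x : A ⊗[k] MvPolynomial σ k => ((1:A) ⊗ₜ[k] g) * x) := by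
    have heq : (fun x : A ⊗[k] MvPolynomial σ k => ((1:A) ⊗ₜ[k] g) * x)
        = ⇑((LinearMap.mulLeft k g).lTensor A) := by
      funext x
      induction x using TensorProduct.induction_on with
      | zero => simp
      | tmul a p => simp [Algebra.TensorProduct.tmul_mul_tmul]
      | add x y hx hy => simp [mul_add, hx, hy]
    rw [heq]
    exact Module.Flat.lTensor_preserves_injective_linearMap _ hinj
  intro p q hpq
  have h1 : e.symm (MvPolynomial.map (algebraMap k A) g) = (1:A) ⊗ₜ[k] g := by
    apply e.injective
    simp [e]
  have h2 : ((1:A) ⊗ₜ[k] g) * e.symm p = ((1:A) ⊗ₜ[k] g) * e.symm q := by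
    rw [← h1, ← map_mul, ← map_mul]
    exact congrArg e.symm hpq
  exact e.symm.injective (hmul h2)


/-- Let `R` be a `k`-algebra, `f₁, …, f_c` a regular sequence in `R` such that
`R/(f₁,…,f_c)` is flat as a `k`-module, and `g ∈ k[x₁,…,xₙ]` a nonzerodivisor such that
`R[x₁,…,xₙ]/(f₁,…,f_c,g) ≠ 0`.  Then the images of `f₁, …, f_c, g` in the polynomial ring
`R[x₁,…,xₙ]` form a regular sequence. -/
theorem isRegular_append_of_flat
    (k R : Type*) [CommRing k] [CommRing R] [Algebra k R] (n : ℕ)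
    (L : List R) (hL : RingTheory.Sequence.IsRegular R L)
    (hflat : Module.Flat k (R ⧸ Ideal.span {x : R | x ∈ L}))
    (g : MvPolynomial (Fin n) k)
    (hg : g ∈ nonZeroDivisors (MvPolynomial (Fin n) k))
    (hnt : Nontrivial
      (MvPolynomial (Fin n) R ⧸
        Ideal.span (insert (MvPolynomial.map (algebraMap k R) g)
          {p : MvPolynomial (Fin n) R | p ∈ L.map MvPolynomial.C}))) :
    RingTheory.Sequence.IsRegular (MvPolynomial (Fin n) R)
      (L.map MvPolynomial.C ++ [MvPolynomial.map (algebraMap k R) g]) := by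
  set P := MvPolynomial (Fin n) R
  set I : Ideal R := Ideal.span {x : R | x ∈ L} with hI
  set g' : P := MvPolynomial.map (algebraMap k R) g with hg'
  -- weakly regular part for the constants
  have hwPC : RingTheory.Sequence.IsWeaklyRegular P
      (L.map (MvPolynomial.C : R →+* P)) := by
    have h1 : RingTheory.Sequence.IsWeaklyRegular (P ⊗[R] R) L :=
      hL.toIsWeaklyRegular.isWeaklyRegular_lTensor
    have h2 : RingTheory.Sequence.IsWeaklyRegular P L :=
      ((TensorProduct.rid R _).isWeaklyRegular_congr L).mp h1
    have h3 := (RingTheory.Sequence.isWeaklyRegular_map_algebraMap_iff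
        (S := P) (M := P) L).mpr h2
    rwa [MvPolynomial.algebraMap_eq] at h3
  -- the regularity of g' on the quotient
  have hofList : Ideal.ofList (L.map (MvPolynomial.C : R →+* P)) = Ideal.map MvPolynomial.C I := by
    rw [hI, Ideal.map_ofList]
  have hsreg : IsSMulRegular (P ⧸ (Ideal.ofList (L.map (MvPolynomial.C : R →+* P)) • ⊤ :
      Submodule P P)) g' := by
    have htop : (Ideal.ofList (L.map (MvPolynomial.C : R →+* P)) • ⊤ : Submodule P P)
        = (Ideal.map MvPolynomial.C I : Ideal P) := by
      rw [smul_eq_mul, Ideal.mul_top, hofList]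
    rw [htop]
    -- transfer along the algebra equivalence
    let e := MvPolynomial.quotientEquivQuotientMvPolynomial (σ := Fin n) I
    have hA : IsSMulRegular (MvPolynomial (Fin n) (R ⧸ I))
        (MvPolynomial.map (algebraMap k (R ⧸ I)) g) :=
      isSMulRegular_map_of_flat k (R ⧸ I) hg
    have key : e (MvPolynomial.map (algebraMap k (R ⧸ I)) g)
        = Ideal.Quotient.mk _ g' := by
      apply e.symm.injective
      rw [AlgEquiv.symm_apply_apply]
      show _ = e.symm (Ideal.Quotient.mk _ g')
      have : e.symm (Ideal.Quotient.mk _ g') = MvPolynomial.map (Ideal.Quotient.mk I) g' := by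
        show Ideal.Quotient.lift (Ideal.map MvPolynomial.C I)
          (MvPolynomial.eval₂Hom (MvPolynomial.C.comp (Ideal.Quotient.mk I)) MvPolynomial.X)
          (fun _ ha => MvPolynomial.eval₂_C_mk_eq_zero ha) (Ideal.Quotient.mk _ g') = _
        rw [Ideal.Quotient.lift_mk, MvPolynomial.map_eq_eval₂Hom_C_comp]
      rw [this, hg', MvPolynomial.map_map, ← Ideal.Quotient.algebraMap_eq,
        ← IsScalarTower.algebraMap_eq]
    intro a b hab
    replace hab : g' • a = g' • b := hab
    have hs : ∀ x : P ⧸ (Ideal.map MvPolynomial.C I : Ideal P),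
        g' • x = Ideal.Quotient.mk _ g' * x := by
      intro x
      obtain ⟨y, rfl⟩ := Ideal.Quotient.mk_surjective x
      rfl
    rw [hs, hs, ← key] at hab
    have h2 := congrArg e.symm hab
    rw [map_mul, map_mul, AlgEquiv.symm_apply_apply] at h2
    have h3 : e.symm a = e.symm b := hA (by simpa [smul_eq_mul] using h2)
    exact e.symm.injective h3
  refine ⟨(RingTheory.Sequence.isWeaklyRegular_append_iff _ _ _).mpr
      ⟨hwPC, (RingTheory.Sequence.isWeaklyRegular_singleton_iff _ _).mpr hsreg⟩, ?_⟩
  -- nontriviality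
  intro htop
  have hset : {r : P | r ∈ L.map (MvPolynomial.C : R →+* P) ++ [g']}
      = insert g' {p : P | p ∈ L.map MvPolynomial.C} := by
    ext x
    simp [List.mem_append, or_comm]
  have : Ideal.ofList (L.map (MvPolynomial.C : R →+* P) ++ [g']) = ⊤ := by
    have := htop.symm
    rwa [smul_eq_mul, Ideal.mul_top] at this
  have hspan : Ideal.span (insert g' {p : P | p ∈ L.map MvPolynomial.C}) = ⊤ := by
    rw [← hset]; exact this
  exact not_subsingleton _ (Ideal.Quotient.subsingleton_iff.mpr hspan)
end

section
/- Let k be an integral domain, n ≥ 1 and s ≥ 1 integers, m₁, …, m_n positive integers, and a₁, …, a_s ∈ k elements such that a_i − a_j is a unit of k for all i ≠ j. Let P(z) = Π_{i=1}^s (z − a_i). Then the k-algebra k[x₁,…,x_n, t₁,…,t_n, z]/(Σ_{i=1}^n x_i^{m_i} t_i − P(z)) is a smooth k-algebra (formally smooth and of finite presentation). -/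
open MvPolynomial

section Aux
variable {A : Type*} [CommRing A] {ι : Type*} [DecidableEq ι]

lemma sum_prod_erase_insert (b : ι → A) {s : Finset ι} {c : ι} (hc : c ∉ s) :
    (∑ i ∈ s, ∏ l ∈ (insert c s).erase i, b l) =
      b c * ∑ i ∈ s, ∏ l ∈ s.erase i, b l := by
  rw [Finset.mul_sum]
  refine Finset.sum_congr rfl fun i hi => ?_
  rw [Finset.erase_insert_of_ne (ne_of_mem_of_not_mem hi hc).symm,
    Finset.prod_insert (fun h => hc (Finset.mem_of_mem_erase h))]

lemma isCoprime_of_isUnit_sub {x y : A} (h : IsUnit (x - y)) : IsCoprime x y := by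
  obtain ⟨u, hu⟩ := h
  exact ⟨(↑u⁻¹ : A), -(↑u⁻¹ : A), by
    rw [neg_mul, ← sub_eq_add_neg, ← mul_sub, ← hu, Units.inv_mul]⟩

lemma isCoprime_prod_sum_erase (b : ι → A) (s : Finset ι)
    (hb : ∀ i ∈ s, ∀ j ∈ s, i ≠ j → IsUnit (b i - b j)) :
    IsCoprime (∏ i ∈ s, b i) (∑ i ∈ s, ∏ l ∈ s.erase i, b l) := by
  classical
  induction s using Finset.induction_on with
  | empty => simpa using isCoprime_one_left
  | @insert c s' hc ih =>
    rw [Finset.prod_insert hc, Finset.sum_insert hc, Finset.erase_insert hc,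
      sum_prod_erase_insert b hc]
    have IH := ih fun i hi j hj hij =>
      hb i (Finset.mem_insert_of_mem hi) j (Finset.mem_insert_of_mem hj) hij
    have hPc : IsCoprime (∏ i ∈ s', b i) (b c) :=
      IsCoprime.prod_left fun i hi =>
        isCoprime_of_isUnit_sub
          (hb i (Finset.mem_insert_of_mem hi) c (Finset.mem_insert_self c s')
            (ne_of_mem_of_not_mem hi hc))
    have h1 : IsCoprime (b c)
        ((∏ i ∈ s', b i) + b c * ∑ i ∈ s', ∏ l ∈ s'.erase i, b l) :=
      hPc.symm.add_mul_left_right _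
    have h2 : IsCoprime (∏ i ∈ s', b i)
        ((∏ i ∈ s', b i) + b c * ∑ i ∈ s', ∏ l ∈ s'.erase i, b l) := by
      have := (hPc.mul_right IH).add_mul_left_right 1
      rwa [mul_one, add_comm] at this
    exact h1.mul_left h2

lemma prod_add_sq_zero (b : ι → A) (s : Finset ι) {e : A} (he : e * e = 0) :
    ∏ i ∈ s, (b i + e) =
      (∏ i ∈ s, b i) + e * ∑ i ∈ s, ∏ l ∈ s.erase i, b l := by
  classical
  induction s using Finset.induction_on with
  | empty => simp
  | @insert c s' hc ih =>
    rw [Finset.prod_insert hc, Finset.sum_insert hc, Finset.erase_insert hc,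
      sum_prod_erase_insert b hc, Finset.prod_insert hc, ih]
    ring_nf
    linear_combination (∑ i ∈ s', ∏ l ∈ s'.erase i, b l) * he

lemma key_calc {S Pz D u w f : A} (hf : f = S - Pz) (h1 : u * Pz + w * D = 1)
    (hff : f * f = 0) :
    S * (1 - u * f) - (Pz + (w * f) * D) = 0 := by
  subst hf
  linear_combination (-(S - Pz)) * h1 + (-u) * hff
end Aux

set_option maxHeartbeats 1000000

/-- Let `k` be an integral domain, `m₁, …, mₙ` positive integers, and `a₁, …, a_s ∈ k` with
`aᵢ − aⱼ` a unit for `i ≠ j`, and let `P(z) = ∏ᵢ (z − aᵢ)`.  Then the coordinate ring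
`k[x₁,…,xₙ,t₁,…,tₙ,z]/(∑ᵢ xᵢ^{mᵢ} tᵢ − P(z))` of the hypersurface `Q_{m,P}` is a smooth
`k`-algebra (formally smooth and of finite presentation).  Here the variable `Sum.inl i`
is `xᵢ`, `Sum.inr (Sum.inl i)` is `tᵢ` and `Sum.inr (Sum.inr ())` is `z`. -/
theorem quadric_generalization_smooth
    (k : Type*) [CommRing k] [IsDomain k] (n s : ℕ) (hn : 1 ≤ n) (hs : 1 ≤ s)
    (m : Fin n → ℕ) (hm : ∀ i, 0 < m i) (a : Fin s → k)
    (ha : ∀ i j, i ≠ j → IsUnit (a i - a j)) :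
    Algebra.Smooth k
      (MvPolynomial (Fin n ⊕ (Fin n ⊕ Unit)) k ⧸
        Ideal.span
          {(∑ i : Fin n, X (Sum.inl i) ^ m i * X (Sum.inr (Sum.inl i))) -
            ∏ j : Fin s, (X (Sum.inr (Sum.inr ())) - C (a j))}) := by
  classical
  set Sp : MvPolynomial (Fin n ⊕ (Fin n ⊕ Unit)) k :=
    ∑ i : Fin n, X (Sum.inl i) ^ m i * X (Sum.inr (Sum.inl i)) with hSp
  set Pz : MvPolynomial (Fin n ⊕ (Fin n ⊕ Unit)) k :=
    ∏ j : Fin s, (X (Sum.inr (Sum.inr ())) - C (a j)) with hPz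
  set F : MvPolynomial (Fin n ⊕ (Fin n ⊕ Unit)) k := Sp - Pz with hF
  set D : MvPolynomial (Fin n ⊕ (Fin n ⊕ Unit)) k :=
    ∑ j : Fin s, ∏ l ∈ Finset.univ.erase j, (X (Sum.inr (Sum.inr ())) - C (a l)) with hD
  -- coprimality of P and its "derivative"
  have hco : IsCoprime Pz D := by
    rw [hPz, hD]
    refine isCoprime_prod_sum_erase _ _ fun i _ j _ hij => ?_
    have h1 : (X (Sum.inr (Sum.inr ())) - C (a i)) - (X (Sum.inr (Sum.inr ())) - C (a j))
        = (C (a j - a i) : MvPolynomial (Fin n ⊕ (Fin n ⊕ Unit)) k) := by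
      rw [map_sub]; ring
    rw [h1]
    exact (ha j i (Ne.symm hij)).map (C : k →+* MvPolynomial (Fin n ⊕ (Fin n ⊕ Unit)) k)
  obtain ⟨u, w, huw⟩ := hco
  -- the substitution giving the first-order section
  set sub : (Fin n ⊕ (Fin n ⊕ Unit)) → MvPolynomial (Fin n ⊕ (Fin n ⊕ Unit)) k := fun v =>
    match v with
    | Sum.inl i => X (Sum.inl i)
    | Sum.inr (Sum.inl i) => X (Sum.inr (Sum.inl i)) * (1 - u * F)
    | Sum.inr (Sum.inr _) => X (Sum.inr (Sum.inr ())) + w * F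
    with hsub
  set φ : MvPolynomial (Fin n ⊕ (Fin n ⊕ Unit)) k →ₐ[k]
      MvPolynomial (Fin n ⊕ (Fin n ⊕ Unit)) k := aeval sub with hφ
  have hφS : φ Sp = Sp * (1 - u * F) := by
    rw [hφ, hSp, map_sum, Finset.sum_mul]
    refine Finset.sum_congr rfl fun i _ => ?_
    simp [hsub, mul_assoc]
  have hφPz : φ Pz = ∏ j : Fin s,
      ((X (Sum.inr (Sum.inr ())) - C (a j)) + w * F) := by
    rw [hφ, hPz, map_prod]
    refine Finset.prod_congr rfl fun j _ => ?_
    rw [map_sub, aeval_X, aeval_C]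
    simp [hsub, algebraMap_eq]
    ring
  -- the presentation map
  set f : MvPolynomial (Fin n ⊕ (Fin n ⊕ Unit)) k →ₐ[k]
      (MvPolynomial (Fin n ⊕ (Fin n ⊕ Unit)) k ⧸ Ideal.span {F}) :=
    Ideal.Quotient.mkₐ k (Ideal.span {F}) with hf
  have hker : RingHom.ker f.toRingHom = Ideal.span {F} := by
    rw [hf]; exact Ideal.mk_ker
  have hker2 : RingHom.ker f.toRingHom ^ 2 = Ideal.span {F ^ 2} := by
    rw [hker, Ideal.span_singleton_pow]
  set q : MvPolynomial (Fin n ⊕ (Fin n ⊕ Unit)) k →ₐ[k]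
      (MvPolynomial (Fin n ⊕ (Fin n ⊕ Unit)) k ⧸ RingHom.ker f.toRingHom ^ 2) :=
    Ideal.Quotient.mkₐ k (RingHom.ker f.toRingHom ^ 2) with hq
  have hq0 : q (F ^ 2) = 0 := by
    rw [hq, Ideal.Quotient.mkₐ_eq_mk, Ideal.Quotient.eq_zero_iff_mem, hker2]
    exact Ideal.mem_span_singleton_self _
  have hff : q F * q F = 0 := by rw [← map_mul, ← sq, hq0]
  -- the key computation: φ F vanishes mod F²
  have hφF : q (φ F) = 0 := by
    have he : q (w * F) * q (w * F) = 0 := by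
      rw [map_mul, mul_mul_mul_comm, hff, mul_zero]
    have hbig := prod_add_sq_zero
      (fun j : Fin s => q (X (Sum.inr (Sum.inr ())) - C (a j))) Finset.univ he
    have h2 : q (φ Pz) = q Pz + q (w * F) * q D := by
      rw [hφPz, map_prod]
      simp only [map_add]
      rw [hbig, hPz, hD, map_prod, map_sum]
      congr 1
      congr 1
      exact Finset.sum_congr rfl fun j _ => (map_prod q _ _).symm
    have h1 : q (φ Sp) = q Sp * (1 - q u * q F) := by
      rw [hφS, map_mul, map_sub, map_one, map_mul]
    have hkc := key_calc (S := q Sp) (Pz := q Pz) (D := q D) (u := q u) (w := q w)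
      (f := q F) ((congrArg q hF).trans (map_sub q Sp Pz))
      (by rw [← map_mul, ← map_mul, ← map_add, huw, map_one]) hff
    rw [show q (φ F) = q (φ (Sp - Pz)) from congrArg (fun x => q (φ x)) hF,
      map_sub, map_sub, h1, h2, map_mul]
    exact hkc
  -- the section
  have hcond : ∀ x ∈ Ideal.span {F}, (q.comp φ) x = 0 := by
    intro x hx
    rw [Ideal.mem_span_singleton] at hx
    obtain ⟨c, rfl⟩ := hx
    simp only [AlgHom.comp_apply, map_mul]
    rw [hφF, zero_mul]
  set g := Ideal.Quotient.liftₐ (Ideal.span {F}) (q.comp φ) hcond with hg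
  have hsec : f.kerSquareLift.comp g =
      AlgHom.id k (MvPolynomial (Fin n ⊕ (Fin n ⊕ Unit)) k ⧸ Ideal.span {F}) := by
    refine Ideal.Quotient.algHom_ext k (MvPolynomial.algHom_ext fun v => ?_)
    simp only [AlgHom.comp_apply, AlgHom.id_apply]
    have hgmk := AlgHom.congr_fun
      (Ideal.Quotient.liftₐ_comp (Ideal.span {F}) (q.comp φ) hcond) (X v)
    simp only [AlgHom.comp_apply] at hgmk
    rw [← hg] at hgmk
    rw [hgmk]
    have hksl : ∀ p : MvPolynomial (Fin n ⊕ (Fin n ⊕ Unit)) k,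
        f.kerSquareLift (q p) = f p := fun p => rfl
    rw [hφ, aeval_X, hksl, hf, Ideal.Quotient.mkₐ_eq_mk,
      Ideal.Quotient.mk_eq_mk_iff_sub_mem, Ideal.mem_span_singleton]
    cases v with
    | inl i => simp [hsub]
    | inr v' => cases v' with
      | inl i => exact ⟨-(X (Sum.inr (Sum.inl i)) * u), by simp [hsub]; ring⟩
      | inr _ => exact ⟨w, by simp [hsub]; ring⟩
  haveI hps : Algebra.FormallySmooth k (MvPolynomial (Fin n ⊕ (Fin n ⊕ Unit)) k) :=
    Algebra.FormallySmooth.of_equiv (MvPolynomial.renameEquiv k Equiv.ulift.{0})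
  have hFS : Algebra.FormallySmooth k
      (MvPolynomial (Fin n ⊕ (Fin n ⊕ Unit)) k ⧸ Ideal.span {F}) :=
    Algebra.FormallySmooth.of_split f g hsec
  have hFP : Algebra.FinitePresentation k
      (MvPolynomial (Fin n ⊕ (Fin n ⊕ Unit)) k ⧸ Ideal.span {F}) :=
    Algebra.FinitePresentation.quotient ⟨{F}, by simp⟩
  exact ⟨hFS, hFP⟩
end
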